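/- Let γ ∈ [0,1), let r_min ≤ r_max be real numbers, and set R_max := (r_max − r_min)/(1 − γ). Let Π be a nonempty set, and for each π ∈ Π and each i ∈ ℕ let H_i be a measurable space, let P^π_i and Q^π_i be probability measures on H_i, and let r_i : H_{i+1} → ℝ be a measurable function with r_min ≤ r_i ≤ r_max. Define J_P(π) := ∑_{i=0}^∞ γ^i ∫ r_i dP^π_{i+1} and J_Q(π) := ∑_{i=0}^∞ γ^i ∫ r_i dQ^π_{i+1}. If π⋆ ∈ Π attains the supremum of J_P over Π and π_B ∈ Π attains the supremum of J_Q over Π, then J_P(π⋆) − J_P(π_B) ≤ 2 R_max · sup_{π ∈ Π} ∑_{i=0}^∞ (1 − γ) γ^i · TV(P^π_{i+1}, Q^π_{i+1}). -/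

import Mathlib

/-!
For a reward `f` with values in `[a, b]`, the layer-cake formula writes `∫ f dP - ∫ f dQ` as an
integral over `t ∈ (0, b - a]` of `P {t ≤ f - a} - Q {t ≤ f - a}`, so it is at most
`(b - a) · TV(P, Q)`. Summing over time with weights `γ^i` gives the simulation lemma
`|J_P(π) - J_Q(π)| ≤ R_max · ∑ (1 - γ) γ^i TV(P^π_{i+1}, Q^π_{i+1})` for every policy `π`. The regret
splits as `(J_P(π⋆) - J_Q(π⋆)) + (J_Q(π⋆) - J_Q(π_B)) + (J_Q(π_B) - J_P(π_B))`, where the middle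
term is nonpositive because `π_B` maximises `J_Q`, and each outer term is bounded by the
simulation lemma.
-/

open MeasureTheory

/-- Total variation distance between two measures:
`TV(P,Q) = sup over measurable sets E of |P(E) - Q(E)|`. -/
noncomputable def tvDist {X : Type*} [MeasurableSpace X] (P Q : Measure X) : ℝ :=
  ⨆ E : {E : Set X // MeasurableSet E}, |(P E.1).toReal - (Q E.1).toReal|

section TotalVariation

variable {X : Type*} [MeasurableSpace X]

lemma integrable_of_mem_Icc {μ : Measure X} [IsFiniteMeasure μ] {f : X → ℝ}
    (hf : Measurable f) {a b : ℝ} (hfab : ∀ x, f x ∈ Set.Icc a b) : Integrable f μ :=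
  Integrable.of_bound hf.aestronglyMeasurable (max |a| |b|) (ae_of_all _ fun x =>
    (Real.norm_eq_abs _).trans_le (abs_le_max_abs_abs (hfab x).1 (hfab x).2))

variable (P Q : Measure X) [IsProbabilityMeasure P] [IsProbabilityMeasure Q]

lemma abs_measureReal_sub_le_one (E : Set X) : |P.real E - Q.real E| ≤ 1 :=
  abs_sub_le_of_nonneg_of_le measureReal_nonneg measureReal_le_one
    measureReal_nonneg measureReal_le_one

lemma abs_measureReal_sub_le_tvDist {E : Set X} (hE : MeasurableSet E) :
    |P.real E - Q.real E| ≤ tvDist P Q :=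
  le_ciSup (f := fun E : {E : Set X // MeasurableSet E} => |P.real E.1 - Q.real E.1|)
    ⟨1, by rintro _ ⟨E, rfl⟩; exact abs_measureReal_sub_le_one P Q E⟩ ⟨E, hE⟩

lemma tvDist_nonneg : 0 ≤ tvDist P Q :=
  (abs_nonneg _).trans (abs_measureReal_sub_le_tvDist P Q MeasurableSet.empty)

lemma tvDist_le_one : tvDist P Q ≤ 1 :=
  ciSup_le fun E => abs_measureReal_sub_le_one P Q E.1

/-- By the layer-cake formula both integrals are integrals over `t ∈ (0, c]` of the measures of
the superlevel sets `{t ≤ g}`, whose difference is at most `tvDist P Q` for each `t`. -/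
lemma abs_integral_sub_integral_le_mul_tvDist_of_nonneg {g : X → ℝ} (hg : Measurable g)
    {c : ℝ} (hc : 0 ≤ c) (hgc : ∀ x, g x ∈ Set.Icc 0 c) :
    |∫ x, g x ∂P - ∫ x, g x ∂Q| ≤ c * tvDist P Q := by
  have layerCake : ∀ (μ : Measure X) [IsProbabilityMeasure μ],
      ∫ x, g x ∂μ = ∫ t in Set.Ioc 0 c, μ.real {x | t ≤ g x} := fun μ _ =>
    (integrable_of_mem_Icc hg hgc).integral_eq_integral_Ioc_meas_le
      (ae_of_all _ fun x => (hgc x).1) (ae_of_all _ fun x => (hgc x).2)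
  have integrableOn_level : ∀ (μ : Measure X) [IsProbabilityMeasure μ],
      IntegrableOn (fun t => μ.real {x | t ≤ g x}) (Set.Ioc 0 c) := fun μ _ => by
    have level_antitone : Antitone fun t : ℝ => μ.real {x | t ≤ g x} := fun _ _ hst =>
      measureReal_mono fun _ hx => hst.trans hx
    exact (level_antitone.locallyIntegrable.integrableOn_isCompact isCompact_Icc).mono_set
      Set.Ioc_subset_Icc_self
  rw [layerCake P, layerCake Q, ← integral_sub (integrableOn_level P) (integrableOn_level Q),
    ← Real.norm_eq_abs]
  calc _ ≤ tvDist P Q * volume.real (Set.Ioc 0 c) :=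
        norm_setIntegral_le_of_norm_le_const measure_Ioc_lt_top fun t _ =>
          abs_measureReal_sub_le_tvDist P Q (measurableSet_le measurable_const hg)
    _ = c * tvDist P Q := by rw [Real.volume_real_Ioc_of_le hc, sub_zero, mul_comm]

lemma abs_integral_sub_integral_le_mul_tvDist {f : X → ℝ} (hf : Measurable f) {a b : ℝ}
    (hab : a ≤ b) (hfab : ∀ x, f x ∈ Set.Icc a b) :
    |∫ x, f x ∂P - ∫ x, f x ∂Q| ≤ (b - a) * tvDist P Q := by
  have key := abs_integral_sub_integral_le_mul_tvDist_of_nonneg P Q (hf.sub_const a)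
    (sub_nonneg.2 hab) fun x => ⟨sub_nonneg.2 (hfab x).1, sub_le_sub_right (hfab x).2 a⟩
  have integral_sub_const : ∀ (μ : Measure X) [IsProbabilityMeasure μ],
      ∫ x, (f x - a) ∂μ = ∫ x, f x ∂μ - a := fun μ _ => by
    rw [integral_sub (integrable_of_mem_Icc hf hfab) (integrable_const a), integral_const,
      probReal_univ, one_smul]
  rwa [integral_sub_const P, integral_sub_const Q, sub_sub_sub_cancel_right] at key

end TotalVariation

section Discounted

variable {γ : ℝ}

lemma summable_pow_mul_of_abs_le (hγ : γ ∈ Set.Ico 0 1) {u : ℕ → ℝ} {C : ℝ}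
    (hu : ∀ i, |u i| ≤ C) : Summable fun i => γ ^ i * u i :=
  ((summable_geometric_of_lt_one hγ.1 hγ.2).mul_right C).of_norm_bounded fun i => by
    rw [norm_mul, norm_pow, Real.norm_of_nonneg hγ.1, Real.norm_eq_abs]
    exact mul_le_mul_of_nonneg_left (hu i) (pow_nonneg hγ.1 i)

lemma summable_one_sub_mul_pow_mul (hγ : γ ∈ Set.Ico 0 1) {u : ℕ → ℝ} {C : ℝ}
    (hu : ∀ i, |u i| ≤ C) : Summable fun i => (1 - γ) * γ ^ i * u i := by
  simpa only [mul_assoc] using (summable_pow_mul_of_abs_le hγ hu).mul_left (1 - γ)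

lemma tsum_one_sub_mul_pow_mul_le_one (hγ : γ ∈ Set.Ico 0 1) {u : ℕ → ℝ}
    (hu : ∀ i, u i ∈ Set.Icc 0 1) : ∑' i, (1 - γ) * γ ^ i * u i ≤ 1 := by
  have hsum := summable_one_sub_mul_pow_mul hγ (C := 1) fun i => abs_le.2
    ⟨by linarith [(hu i).1], (hu i).2⟩
  calc _ ≤ (1 - γ) * (1 - γ)⁻¹ :=
        hasSum_le (fun i => mul_le_of_le_one_right
          (mul_nonneg (sub_nonneg.2 hγ.2.le) (pow_nonneg hγ.1 i))
          (hu i).2) hsum.hasSum ((hasSum_geometric_of_lt_one hγ.1 hγ.2).mul_left (1 - γ))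
    _ = 1 := mul_inv_cancel₀ (sub_pos.2 hγ.2).ne'

theorem abs_tsum_integral_sub_le_tsum_tvDist (hγ : γ ∈ Set.Ico 0 1)
    {X : ℕ → Type*} [∀ i, MeasurableSpace (X i)]
    (μ ν : ∀ i, Measure (X i)) [∀ i, IsProbabilityMeasure (μ i)]
    [∀ i, IsProbabilityMeasure (ν i)] {a b : ℝ} (hab : a ≤ b)
    (f : ∀ i, X i → ℝ) (hf : ∀ i, Measurable (f i)) (hfab : ∀ i x, f i x ∈ Set.Icc a b) :
    |∑' i, γ ^ i * ∫ x, f i x ∂μ i - ∑' i, γ ^ i * ∫ x, f i x ∂ν i| ≤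
      (b - a) / (1 - γ) * ∑' i, (1 - γ) * γ ^ i * tvDist (μ i) (ν i) := by
  have abs_integral_le : ∀ i (ρ : Measure (X i)) [IsProbabilityMeasure ρ],
      |∫ x, f i x ∂ρ| ≤ max |a| |b| := fun i ρ _ => by
    simpa using norm_integral_le_of_norm_le_const (μ := ρ)
      (ae_of_all _ fun x =>
        (Real.norm_eq_abs _).trans_le (abs_le_max_abs_abs (hfab i x).1 (hfab i x).2))
  have summable_tv := summable_one_sub_mul_pow_mul hγ (C := 1) fun i => by
    rw [abs_of_nonneg (tvDist_nonneg (μ i) (ν i))]; exact tvDist_le_one (μ i) (ν i)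
  rw [← (summable_pow_mul_of_abs_le hγ fun i => abs_integral_le i (μ i)).tsum_sub
    (summable_pow_mul_of_abs_le hγ fun i => abs_integral_le i (ν i)), ← tsum_mul_left,
    ← Real.norm_eq_abs]
  refine tsum_of_norm_bounded (summable_tv.mul_left _).hasSum fun i => ?_
  rw [← mul_sub, norm_mul, norm_pow, Real.norm_of_nonneg hγ.1, Real.norm_eq_abs]
  calc _ ≤ γ ^ i * ((b - a) * tvDist (μ i) (ν i)) :=
        mul_le_mul_of_nonneg_left
          (abs_integral_sub_integral_le_mul_tvDist _ _ (hf i) hab (hfab i)) (pow_nonneg hγ.1 i)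
    _ = (b - a) / (1 - γ) * ((1 - γ) * γ ^ i * tvDist (μ i) (ν i)) := by
        field_simp [(sub_pos.2 hγ.2).ne']

end Discounted

theorem regret_le_tv_general {Pol : Type*}
    {H : ℕ → Type*} [∀ i, MeasurableSpace (H i)]
    (γ : ℝ) (hγ : γ ∈ Set.Ico (0 : ℝ) 1)
    (rmin rmax : ℝ) (hr : rmin ≤ rmax)
    (P Q : Pol → ∀ i, Measure (H i))
    [∀ π i, IsProbabilityMeasure (P π i)] [∀ π i, IsProbabilityMeasure (Q π i)]
    (r : ∀ i, H (i + 1) → ℝ) (hmeas : ∀ i, Measurable (r i))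
    (hbound : ∀ i x, rmin ≤ r i x ∧ r i x ≤ rmax)
    (JP JQ : Pol → ℝ)
    (hJP : ∀ π, JP π = ∑' i, γ ^ i * ∫ x, r i x ∂(P π (i + 1)))
    (hJQ : ∀ π, JQ π = ∑' i, γ ^ i * ∫ x, r i x ∂(Q π (i + 1)))
    (πs πB : Pol)
    (hπB : ∀ π, JQ π ≤ JQ πB) :
    JP πs - JP πB ≤ 2 * ((rmax - rmin) / (1 - γ)) *
      ⨆ π, ∑' i, (1 - γ) * γ ^ i * tvDist (P π (i + 1)) (Q π (i + 1)) := by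
  set S := fun π => ∑' i, (1 - γ) * γ ^ i * tvDist (P π (i + 1)) (Q π (i + 1))
  have hR : 0 ≤ (rmax - rmin) / (1 - γ) := div_nonneg (sub_nonneg.2 hr) (sub_pos.2 hγ.2).le
  have hS : BddAbove (Set.range S) := ⟨1, by
    rintro _ ⟨π, rfl⟩
    exact tsum_one_sub_mul_pow_mul_le_one hγ fun i => ⟨tvDist_nonneg _ _, tvDist_le_one _ _⟩⟩
  have value_gap : ∀ π, |JP π - JQ π| ≤ (rmax - rmin) / (1 - γ) * ⨆ π, S π := fun π => by
    rw [hJP, hJQ]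
    exact (abs_tsum_integral_sub_le_tsum_tvDist hγ (fun i => P π (i + 1)) (fun i => Q π (i + 1))
      hr r hmeas hbound).trans (mul_le_mul_of_nonneg_left (le_ciSup hS π) hR)
  linarith [(abs_le.1 (value_gap πs)).2, (abs_le.1 (value_gap πB)).1, hπB πs]

/-- Regret bound via total variation: if `π⋆` maximises `J_P` and `π_B` maximises `J_Q`,
where `J_P(π) = ∑ γ^i ∫ r_i dP^π_{i+1}` and `J_Q(π) = ∑ γ^i ∫ r_i dQ^π_{i+1}` with rewards in
`[r_min, r_max]`, then
`J_P(π⋆) − J_P(π_B) ≤ 2 R_max sup_π ∑ (1−γ) γ^i TV(P^π_{i+1}, Q^π_{i+1})`. -/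
theorem regret_le_tv {Pol : Type*} [Nonempty Pol]
    {H : ℕ → Type*} [∀ i, MeasurableSpace (H i)]
    (γ : ℝ) (hγ : γ ∈ Set.Ico (0 : ℝ) 1)
    (rmin rmax : ℝ) (hr : rmin ≤ rmax)
    (P Q : Pol → ∀ i, Measure (H i))
    [∀ π i, IsProbabilityMeasure (P π i)] [∀ π i, IsProbabilityMeasure (Q π i)]
    (r : ∀ i, H (i + 1) → ℝ) (hmeas : ∀ i, Measurable (r i))
    (hbound : ∀ i x, rmin ≤ r i x ∧ r i x ≤ rmax)
    (JP JQ : Pol → ℝ)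
    (hJP : ∀ π, JP π = ∑' i, γ ^ i * ∫ x, r i x ∂(P π (i + 1)))
    (hJQ : ∀ π, JQ π = ∑' i, γ ^ i * ∫ x, r i x ∂(Q π (i + 1)))
    (πs πB : Pol)
    (hπs : ∀ π, JP π ≤ JP πs) (hπB : ∀ π, JQ π ≤ JQ πB) :
    JP πs - JP πB ≤ 2 * ((rmax - rmin) / (1 - γ)) *
      ⨆ π, ∑' i, (1 - γ) * γ ^ i * tvDist (P π (i + 1)) (Q π (i + 1)) :=
  regret_le_tv_general γ hγ rmin rmax hr P Q r hmeas hbound JP JQ hJP hJQ πs πB hπB
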